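/- Let E be a metric space. The space B_b(E) of bounded Borel measurable real functions on E, endowed with the locally convex topology τ_K generated by the seminorms p_{K,μ}(f) = sup_{x∈K}|f(x)| + |∫_E f dμ| (K compact, μ ∈ ca(E)), is sequentially complete. -/

import Mathlib

open Filter Topology MeasureTheory

/-- Integration of a function against a finite countably additive signed Borel measure,
via its Jordan decomposition. -/
noncomputable def intSM' {E : Type*} [MeasurableSpace E]
    (s : SignedMeasure E) (f : E → ℝ) : ℝ :=
  (∫ x, f x ∂s.toJordanDecomposition.posPart) -
    ∫ x, f x ∂s.toJordanDecomposition.negPart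

/-- The space B_b(E) of bounded Borel measurable real functions, as a submodule of E → ℝ. -/
def BbSub (E : Type*) [MeasurableSpace E] : Submodule ℝ (E → ℝ) where
  carrier := {f | Measurable f ∧ ∃ C : ℝ, ∀ x, |f x| ≤ C}
  add_mem' := by
    rintro f g ⟨hf, Cf, hCf⟩ ⟨hg, Cg, hCg⟩
    exact ⟨hf.add hg, Cf + Cg, fun x =>
      (abs_add_le _ _).trans (add_le_add (hCf x) (hCg x))⟩
  zero_mem' := ⟨measurable_const, 0, by simp⟩
  smul_mem' := by
    rintro c f ⟨hf, Cf, hCf⟩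
    refine ⟨hf.const_smul c, |c| * Cf, fun x => ?_⟩
    simp only [Pi.smul_apply, smul_eq_mul, abs_mul]
    exact mul_le_mul_of_nonneg_left (hCf x) (abs_nonneg c)

/-- The locally convex topology τ_K on B_b(E), generated by the seminorms
p_{K,μ}(f) = sup_{x∈K}|f(x)| + |∫ f dμ| over nonempty compact K and μ ∈ ca(E):
the initial topology of uniform convergence on each nonempty compact set together with
the integration functionals. -/
noncomputable def tauKBb (E : Type*) [MetricSpace E] [MeasurableSpace E] [BorelSpace E] :
    TopologicalSpace (BbSub E) :=
  (⨅ (K : Set E) (_ : IsCompact K) (_ : K.Nonempty),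
      TopologicalSpace.induced
        (fun f : BbSub E => UniformFun.ofFun fun x : K => f.1 x)
        inferInstance) ⊓
    ⨅ s : SignedMeasure E,
      TopologicalSpace.induced (fun f : BbSub E => intSM' s f.1) inferInstance

/-!
A τ_K-Cauchy sequence `fₙ` is uniformly Cauchy on every compact set (in particular pointwise
Cauchy), and `∫ fₙ ds` is Cauchy, hence bounded, for every signed measure `s`. Testing against the
discrete measures `∑ aₖ δ_{xₖ}`, `a ∈ ℓ¹`, the Banach–Steinhaus theorem on `ℓ¹` upgrades this
weak boundedness to a uniform bound `sup ‖fₙ‖_∞ < ∞`. So the pointwise limit `g` is a bounded Borel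
function, `fₙ → g` uniformly on compacts, and `∫ fₙ ds → ∫ g ds` by dominated convergence.
-/
section Integration

variable {E : Type*} [MeasurableSpace E]

lemma integrable_of_mem_BbSub {μ : Measure E} [IsFiniteMeasure μ] {u : E → ℝ}
    (hu : u ∈ BbSub E) : Integrable u μ := by
  obtain ⟨hm, C, hC⟩ := hu
  exact .of_bound hm.aestronglyMeasurable C (.of_forall hC)

lemma intSM'_sub (s : SignedMeasure E) (u v : BbSub E) :
    intSM' s ↑(u - v) = intSM' s u - intSM' s v := by
  simp only [intSM', Submodule.coe_sub, Pi.sub_apply,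
    integral_sub (integrable_of_mem_BbSub u.2) (integrable_of_mem_BbSub v.2)]
  ring

lemma intSM'_zero (s : SignedMeasure E) : intSM' s ↑(0 : BbSub E) = 0 := by
  simp [intSM']

lemma posPart_add_eq_negPart_add (μ ν : Measure E) [IsFiniteMeasure μ] [IsFiniteMeasure ν] :
    (μ.toSignedMeasure - ν.toSignedMeasure).toJordanDecomposition.posPart + ν =
      (μ.toSignedMeasure - ν.toSignedMeasure).toJordanDecomposition.negPart + μ := by
  have h := (μ.toSignedMeasure - ν.toSignedMeasure).toSignedMeasure_toJordanDecomposition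
  rw [JordanDecomposition.toSignedMeasure, sub_eq_sub_iff_add_eq_add] at h
  rw [← Measure.toSignedMeasure_eq_toSignedMeasure_iff, Measure.toSignedMeasure_add,
    Measure.toSignedMeasure_add, h, add_comm]

lemma intSM'_toSignedMeasure_sub (μ ν : Measure E) [IsFiniteMeasure μ] [IsFiniteMeasure ν]
    {u : E → ℝ} (hu : u ∈ BbSub E) :
    intSM' (μ.toSignedMeasure - ν.toSignedMeasure) u = (∫ x, u x ∂μ) - ∫ x, u x ∂ν := by
  have h := congrArg (fun m => ∫ x, u x ∂m) (posPart_add_eq_negPart_add μ ν)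
  simp only [integral_add_measure (integrable_of_mem_BbSub hu)
    (integrable_of_mem_BbSub hu)] at h
  rw [intSM']
  linarith

lemma isFiniteMeasure_sum_smul_dirac (x : ℕ → E) {w : ℕ → NNReal} (hw : Summable w) :
    IsFiniteMeasure (Measure.sum fun k => (w k : ENNReal) • Measure.dirac (x k)) := by
  constructor
  simp only [Measure.sum_apply _ MeasurableSet.univ, Measure.smul_apply, measure_univ,
    smul_eq_mul, mul_one, ← ENNReal.coe_tsum hw]
  exact ENNReal.coe_lt_top

lemma hasSum_integral_sum_smul_dirac (x : ℕ → E) {w : ℕ → NNReal} (hw : Summable w)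
    {u : E → ℝ} (hu : u ∈ BbSub E) :
    HasSum (fun k => w k * u (x k))
      (∫ y, u y ∂Measure.sum fun k => (w k : ENNReal) • Measure.dirac (x k)) := by
  have := isFiniteMeasure_sum_smul_dirac x hw
  refine (hasSum_integral_measure (integrable_of_mem_BbSub hu)).congr_fun fun k => ?_
  rw [integral_smul_measure, integral_dirac' _ _ hu.1.stronglyMeasurable]
  simp

lemma exists_signedMeasure_intSM'_eq_tsum (x : ℕ → E) {a : ℕ → ℝ} (ha : Summable a) :
    ∃ s : SignedMeasure E, ∀ u ∈ BbSub E, intSM' s u = ∑' k, a k * u (x k) := by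
  have := isFiniteMeasure_sum_smul_dirac x ha.toNNReal
  have := isFiniteMeasure_sum_smul_dirac x ha.neg.toNNReal
  refine ⟨(Measure.sum fun k => ((a k).toNNReal : ENNReal) • Measure.dirac (x k)).toSignedMeasure -
    (Measure.sum fun k => ((-a k).toNNReal : ENNReal) • Measure.dirac (x k)).toSignedMeasure,
    fun u hu => ?_⟩
  rw [intSM'_toSignedMeasure_sub _ _ hu]
  refine (((hasSum_integral_sum_smul_dirac x ha.toNNReal hu).sub
    (hasSum_integral_sum_smul_dirac x ha.neg.toNNReal hu)).congr_fun fun k => ?_).tsum_eq.symm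
  rw [Real.coe_toNNReal', Real.coe_toNNReal', ← sub_mul, max_zero_sub_max_neg_zero_eq_self]

lemma tendsto_intSM'_of_tendsto {u : ℕ → E → ℝ} {g : E → ℝ}
    (hu : ∀ n, Measurable (u n)) {C : ℝ} (hC : ∀ n x, |u n x| ≤ C)
    (hg : ∀ x, Tendsto (fun n => u n x) atTop (𝓝 (g x))) (s : SignedMeasure E) :
    Tendsto (fun n => intSM' s (u n)) atTop (𝓝 (intSM' s g)) := by
  have hdom (μ : Measure E) [IsFiniteMeasure μ] :
      Tendsto (fun n => ∫ x, u n x ∂μ) atTop (𝓝 (∫ x, g x ∂μ)) :=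
    tendsto_integral_of_dominated_convergence (fun _ => C) (fun n => (hu n).aestronglyMeasurable)
      (integrable_const C) (fun n => .of_forall (hC n)) (.of_forall hg)
  exact (hdom _).sub (hdom _)

end Integration

lemma uniformCauchySeqOn_of_tendstoUniformlyOn_sub {ι α β : Type*} [SeminormedAddCommGroup β]
    {F : ι → α → β} {p : Filter ι} {K : Set α}
    (h : TendstoUniformlyOn (fun q : ι × ι => F q.1 - F q.2) 0 (p ×ˢ p) K) :
    UniformCauchySeqOn F p K := by
  intro U hU
  obtain ⟨ε, hε, hεU⟩ := Metric.mem_uniformity_dist.1 hU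
  filter_upwards [Metric.tendstoUniformlyOn_iff.1 h ε hε] with q hq x hx
  exact hεU (by simpa [dist_eq_norm, norm_sub_rev] using hq x hx)

lemma cauchySeq_of_tendsto_sub {β : Type*} [SeminormedAddCommGroup β] {a : ℕ → β}
    (h : Tendsto (fun q : ℕ × ℕ => a q.1 - a q.2) (atTop ×ˢ atTop) (𝓝 0)) : CauchySeq a := by
  rw [cauchySeq_iff_tendsto_dist_atTop_0, ← prod_atTop_atTop_eq]
  simpa [dist_eq_norm] using h.norm

section LpOne

variable {ι : Type*} {F : ι → Type*} [∀ i, NormedAddCommGroup (F i)]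

lemma lp_one_summable_norm (a : lp F 1) : Summable fun i => ‖a i‖ := by
  simpa using (lp.memℓp a).summable (p := 1) (by norm_num)

lemma lp_one_norm_eq_tsum (a : lp F 1) : ‖a‖ = ∑' i, ‖a i‖ := by
  simpa using lp.norm_eq_tsum_rpow (p := 1) (by norm_num) a

end LpOne

local notation "ℓ¹" => lp (fun _ : ℕ => ℝ) 1

noncomputable def lpOnePairing (c : ℕ → ℝ) {C : ℝ} (hC : ∀ k, |c k| ≤ C) :
    ℓ¹ →L[ℝ] ℝ :=
  have hle (a : ℓ¹) (k : ℕ) : ‖a k * c k‖ ≤ ‖a k‖ * C := by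
    rw [norm_mul]
    exact mul_le_mul_of_nonneg_left (hC k) (norm_nonneg _)
  have hsum (a : ℓ¹) : Summable fun k => ‖a k * c k‖ :=
    .of_nonneg_of_le (fun _ => norm_nonneg _) (hle a) ((lp_one_summable_norm a).mul_right C)
  LinearMap.mkContinuous
    { toFun a := ∑' k, a k * c k
      map_add' a b := by
        simp only [lp.coeFn_add, Pi.add_apply, add_mul]
        exact (hsum a).of_norm.tsum_add (hsum b).of_norm
      map_smul' r a := by
        simp only [lp.coeFn_smul, Pi.smul_apply, smul_eq_mul, mul_assoc, RingHom.id_apply]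
        exact tsum_mul_left }
    C fun a => calc
      ‖∑' k, a k * c k‖ ≤ ∑' k, ‖a k * c k‖ := norm_tsum_le_tsum_norm (hsum a)
      _ ≤ ∑' k, ‖a k‖ * C := (hsum a).tsum_le_tsum (hle a) ((lp_one_summable_norm a).mul_right C)
      _ = C * ‖a‖ := by rw [tsum_mul_right, lp_one_norm_eq_tsum, mul_comm]

@[simp]
lemma lpOnePairing_apply (c : ℕ → ℝ) {C : ℝ} (hC : ∀ k, |c k| ≤ C) (a : ℓ¹) :
    lpOnePairing c hC a = ∑' k, a k * c k :=
  rfl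

lemma lpOnePairing_single (c : ℕ → ℝ) {C : ℝ} (hC : ∀ k, |c k| ≤ C) (k : ℕ) :
    lpOnePairing c hC (lp.single 1 k 1) = c k := by
  rw [lpOnePairing_apply,
    tsum_eq_single k fun j hj => by rw [lp.single_apply_ne 1 k _ hj, zero_mul],
    lp.single_apply_self, one_mul]

section UniformBoundedness

variable {E : Type*} [MeasurableSpace E] {ι : Type*} {u : ι → E → ℝ}

/-- `a ↦ ∑ aₖ uᵢ(xₖ)` is integration of `uᵢ` against the signed measure `∑ aₖ δ_{xₖ}`, so these
functionals on `ℓ¹` are pointwise bounded, and Banach–Steinhaus bounds their norms. -/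
lemma exists_bound_comp_of_forall_intSM'_bdd (hu : ∀ i, u i ∈ BbSub E)
    (h : ∀ s : SignedMeasure E, ∃ B, ∀ i, |intSM' s (u i)| ≤ B) (x : ℕ → E) :
    ∃ C, ∀ i k, |u i (x k)| ≤ C := by
  choose C hC using fun i => (hu i).2
  have hbdd (a : ℓ¹) :
      ∃ B, ∀ i, ‖lpOnePairing (u i ∘ x) (fun k => hC i (x k)) a‖ ≤ B := by
    obtain ⟨s, hs⟩ := exists_signedMeasure_intSM'_eq_tsum x (lp_one_summable_norm a).of_norm
    obtain ⟨B, hB⟩ := h s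
    exact ⟨B, fun i => by simpa [hs _ (hu i)] using hB i⟩
  obtain ⟨C', hC'⟩ := banach_steinhaus hbdd
  refine ⟨C', fun i k => ?_⟩
  calc |u i (x k)| = ‖lpOnePairing (u i ∘ x) (fun k => hC i (x k)) (lp.single 1 k 1)‖ := by
        rw [lpOnePairing_single, Real.norm_eq_abs, Function.comp_apply]
    _ ≤ ‖lpOnePairing (u i ∘ x) (fun k => hC i (x k))‖ * ‖(lp.single 1 k 1 : ℓ¹)‖ :=
        ContinuousLinearMap.le_opNorm _ _
    _ ≤ C' := by rw [lp.norm_single (by norm_num), norm_one, mul_one]; exact hC' i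

lemma exists_bound_of_forall_intSM'_bdd (hu : ∀ i, u i ∈ BbSub E)
    (h : ∀ s : SignedMeasure E, ∃ B, ∀ i, |intSM' s (u i)| ≤ B) :
    ∃ C, ∀ i y, |u i y| ≤ C := by
  by_contra! hunb
  choose i x hx using fun n : ℕ => hunb n
  obtain ⟨C, hC⟩ := exists_bound_comp_of_forall_intSM'_bdd hu h x
  have := hx ⌈C⌉₊
  linarith [hC (i ⌈C⌉₊) ⌈C⌉₊, Nat.le_ceil C]

end UniformBoundedness

section TauK

variable {E : Type*} [MetricSpace E] [MeasurableSpace E] [BorelSpace E]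

lemma nhds_tauKBb (g : BbSub E) :
    @nhds _ (tauKBb E) g =
      (⨅ (K : Set E) (_ : IsCompact K) (_ : K.Nonempty),
        comap (fun f : BbSub E => UniformFun.ofFun fun x : K => f.1 x)
          (𝓝 (UniformFun.ofFun fun x : K => g.1 x))) ⊓
      ⨅ s : SignedMeasure E, comap (fun f : BbSub E => intSM' s f.1) (𝓝 (intSM' s g.1)) := by
  refine (_root_.nhds_inf (t₁ := ⨅ (K : Set E) (_ : IsCompact K) (_ : K.Nonempty),
      .induced (fun f : BbSub E => UniformFun.ofFun fun x : K => f.1 x) inferInstance)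
    (t₂ := ⨅ s : SignedMeasure E,
      .induced (fun f : BbSub E => intSM' s f.1) inferInstance)).trans ?_
  simp only [_root_.nhds_iInf, nhds_induced]

lemma tendsto_tauKBb_iff {ι : Type*} {l : Filter ι} {u : ι → BbSub E} {g : BbSub E} :
    Tendsto u l (@nhds _ (tauKBb E) g) ↔
      (∀ K : Set E, IsCompact K → K.Nonempty →
        TendstoUniformlyOn (fun i => (u i : E → ℝ)) g l K) ∧
      ∀ s : SignedMeasure E, Tendsto (fun i => intSM' s (u i)) l (𝓝 (intSM' s g)) := by
  simp only [nhds_tauKBb, tendsto_inf, tendsto_iInf, tendsto_comap_iff, Function.comp_def,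
    UniformFun.tendsto_iff_tendstoUniformly, UniformFun.toFun_ofFun,
    tendstoUniformlyOn_iff_tendstoUniformly_comp_coe]

end TauK

/-- (B_b(E), τ_K) is sequentially complete: every τ_K-Cauchy sequence of
bounded Borel functions τ_K-converges to a bounded Borel function. -/
theorem stmt16 {E : Type*} [MetricSpace E] [MeasurableSpace E] [BorelSpace E]
    (f : ℕ → BbSub E)
    (hf : ∀ U ∈ @nhds _ (tauKBb E) (0 : BbSub E),
      ∃ N : ℕ, ∀ m ≥ N, ∀ n ≥ N, f m - f n ∈ U) :
    ∃ g : BbSub E, Tendsto f atTop (@nhds _ (tauKBb E) g) := by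
  have hcauchy : Tendsto (fun q : ℕ × ℕ => f q.1 - f q.2) (atTop ×ˢ atTop)
      (@nhds _ (tauKBb E) 0) := by
    rw [prod_atTop_atTop_eq]
    intro U hU
    obtain ⟨N, hN⟩ := hf U hU
    exact eventually_atTop_prod_self'.2 ⟨N, hN⟩
  obtain ⟨hunif, hint⟩ := tendsto_tauKBb_iff.1 hcauchy
  have hucs (K : Set E) (hK : IsCompact K) (hne : K.Nonempty) :
      UniformCauchySeqOn (fun n => (f n : E → ℝ)) atTop K :=
    uniformCauchySeqOn_of_tendstoUniformlyOn_sub (hunif K hK hne)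
  choose g hg using fun x => cauchySeq_tendsto_of_complete
    ((hucs {x} isCompact_singleton (Set.singleton_nonempty x)).cauchySeq rfl)
  have hbdd (s : SignedMeasure E) : ∃ B, ∀ n, |intSM' s (f n)| ≤ B := by
    have hcs : CauchySeq fun n => intSM' s (f n) :=
      cauchySeq_of_tendsto_sub (by simpa only [intSM'_sub, intSM'_zero] using hint s)
    simpa using isBounded_iff_forall_norm_le.1 hcs.isBounded_range
  obtain ⟨C, hC⟩ := exists_bound_of_forall_intSM'_bdd (fun n => (f n).2) hbdd
  have hgC (x : E) : |g x| ≤ C :=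
    le_of_tendsto ((continuous_abs.tendsto _).comp (hg x)) (.of_forall fun n => hC n x)
  refine ⟨⟨g, measurable_of_tendsto_metrizable (fun n => (f n).2.1) (tendsto_pi_nhds.2 hg),
    C, hgC⟩, tendsto_tauKBb_iff.2 ⟨fun K hK hne => ?_, ?_⟩⟩
  · exact (hucs K hK hne).tendstoUniformlyOn_of_tendsto fun x _ => hg x
  · exact tendsto_intSM'_of_tendsto (fun n => (f n).2.1) hC hg
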